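/- arXiv:0805.2812 — 6 statements merged into one kernel-verified Lean document; each statement's English description precedes it below -/
import Mathlib

section
/- Fix a codeword c ∈ C. The map L taking a feasible LP point (f, w) to (f̃, w̃), where for each coordinate i with c_i = β one sets f̃_i^(α) = 1 − ∑_{γ≠0} f_i^(γ) if α = −β and f̃_i^(α) = f_i^(α+β) otherwise, and where w̃_{j,r} = w_{j, r + x_j(c)}, maps the LP polytope Q into itself. -/
open Finset
open scoped Classical

/-- The single parity check code C_j associated with row j of H. -/
def SPC {R : Type} [CommRing R] [DecidableEq R] {m n : ℕ} (H : Matrix (Fin m) (Fin n) R)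
    (j : Fin m) : Set ({i : Fin n // H j i ≠ 0} → R) :=
  {b | ∑ i : {i : Fin n // H j i ≠ 0}, b i * H j i.1 = 0}

/-- The projection of c ∈ R^n onto the support of row j. -/
def proj {R : Type} [CommRing R] {m n : ℕ} (H : Matrix (Fin m) (Fin n) R)
    (j : Fin m) (c : Fin n → R) : {i : Fin n // H j i ≠ 0} → R :=
  fun i => c i.1

/-- Membership in the LP decoding polytope Q: w is nonnegative on each C_j,
sums to one over each C_j, and f is consistent with w. -/
def memQ {R : Type} [CommRing R] [Fintype R] [DecidableEq R] {m n : ℕ}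
    (H : Matrix (Fin m) (Fin n) R)
    (f : Fin n → {α : R // α ≠ 0} → ℝ)
    (w : (j : Fin m) → ({i : Fin n // H j i ≠ 0} → R) → ℝ) : Prop :=
  (∀ (j : Fin m) (b : {i : Fin n // H j i ≠ 0} → R), b ∈ SPC H j → 0 ≤ w j b) ∧
  (∀ j : Fin m,
    ∑ b : {i : Fin n // H j i ≠ 0} → R, (if b ∈ SPC H j then w j b else 0) = 1) ∧
  (∀ (j : Fin m) (i : {i : Fin n // H j i ≠ 0}) (α : {α : R // α ≠ 0}),
    f i.1 α = ∑ b : {i : Fin n // H j i ≠ 0} → R,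
      (if b ∈ SPC H j ∧ b i = α.1 then w j b else 0))

/-- The f-part of the translation map L determined by the codeword c. -/
def Lf {R : Type} [CommRing R] [Fintype R] [DecidableEq R] {n : ℕ} (c : Fin n → R)
    (f : Fin n → {α : R // α ≠ 0} → ℝ) : Fin n → {α : R // α ≠ 0} → ℝ :=
  fun i α =>
    if h : (α : R) = -(c i) then 1 - ∑ γ : {γ : R // γ ≠ 0}, f i γ
    else f i ⟨(α : R) + c i, fun hz => h (eq_neg_iff_add_eq_zero.mpr hz)⟩

/-- The w-part of the translation map L determined by the codeword c. -/
def Lw {R : Type} [CommRing R] [DecidableEq R] {m n : ℕ} (H : Matrix (Fin m) (Fin n) R)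
    (c : Fin n → R)
    (w : (j : Fin m) → ({i : Fin n // H j i ≠ 0} → R) → ℝ) :
    (j : Fin m) → ({i : Fin n // H j i ≠ 0} → R) → ℝ :=
  fun j r => w j (r + proj H j c)

/-!
Since c is a codeword, x_j(c) lies in the group C_j, so translating by it permutes C_j:
w̃_j is again a probability distribution on C_j, and its marginal at coordinate i and value α
is the marginal of w_j at α + c_i. For α ≠ -c_i this is f_i^(α + c_i); for α = -c_i it is the
marginal at 0, which is one minus the marginals at the nonzero values.
-/

section Fibers

variable {ι R M : Type*} [Fintype ι] [DecidableEq ι] [Fintype R] [AddCommMonoid M]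
  {S : Set (ι → R)} [DecidablePred (· ∈ S)]

theorem sum_ite_mem_comp_add [AddGroup R] {p : ι → R} (hS : ∀ b, b + p ∈ S ↔ b ∈ S)
    (g : (ι → R) → M) :
    ∑ b, (if b ∈ S then g (b + p) else 0) = ∑ b, if b ∈ S then g b else 0 := by
  simpa only [Equiv.coe_addRight, hS] using
    Equiv.sum_comp (Equiv.addRight p) fun b => if b ∈ S then g b else 0

variable [DecidableEq R]

def fiberMass (S : Set (ι → R)) [DecidablePred (· ∈ S)] (g : (ι → R) → M) (i : ι) (β : R) : M :=
  ∑ b, if b ∈ S ∧ b i = β then g b else 0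

theorem sum_fiberMass (g : (ι → R) → M) (i : ι) :
    ∑ β, fiberMass S g i β = ∑ b, if b ∈ S then g b else 0 := by
  unfold fiberMass
  rw [Finset.sum_comm]
  refine Finset.sum_congr rfl fun b _ => ?_
  simp only [and_comm (a := b ∈ S), ite_and, Finset.sum_ite_eq, Finset.mem_univ, if_true]

theorem fiberMass_zero_add_sum_ne_zero [Zero R] (g : (ι → R) → M) (i : ι) :
    fiberMass S g i 0 + ∑ γ : {γ : R // γ ≠ 0}, fiberMass S g i γ =
      ∑ b, if b ∈ S then g b else 0 := by
  rw [← sum_fiberMass, Fintype.sum_eq_add_sum_subtype_ne _ (0 : R)]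

theorem fiberMass_comp_add [AddGroup R] {p : ι → R} (hS : ∀ b, b + p ∈ S ↔ b ∈ S)
    (g : (ι → R) → M) (i : ι) (β : R) :
    fiberMass S (fun b => g (b + p)) i β = fiberMass S g i (β + p i) := by
  unfold fiberMass
  rw [← Equiv.sum_comp (Equiv.addRight p) fun b => if b ∈ S ∧ b i = β + p i then g b else 0]
  simp only [Equiv.coe_addRight, hS, Pi.add_apply, add_left_inj]

end Fibers

theorem proj_mem_SPC {R : Type} [CommRing R] [DecidableEq R] {m n : ℕ}
    (H : Matrix (Fin m) (Fin n) R) {c : Fin n → R} {j : Fin m}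
    (hc : ∑ i : Fin n, c i * H j i = 0) : proj H j c ∈ SPC H j := by
  have hzero : ∑ i : {i // ¬H j i ≠ 0}, c i * H j i = 0 :=
    Finset.sum_eq_zero fun i _ => by rw [not_not.mp i.2, mul_zero]
  rwa [← Fintype.sum_subtype_add_sum_subtype (fun i => H j i ≠ 0), hzero, add_zero] at hc

theorem add_mem_SPC_iff {R : Type} [CommRing R] [DecidableEq R] {m n : ℕ}
    {H : Matrix (Fin m) (Fin n) R} {j : Fin m} {p : {i : Fin n // H j i ≠ 0} → R}
    (hp : p ∈ SPC H j) (b : {i : Fin n // H j i ≠ 0} → R) :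
    b + p ∈ SPC H j ↔ b ∈ SPC H j := by
  simp only [SPC, Set.mem_ofPred_eq, Pi.add_apply, add_mul, Finset.sum_add_distrib] at hp ⊢
  rw [hp, add_zero]

/-- The translation map L maps the LP polytope Q into itself. -/
theorem L_maps_Q_to_Q {R : Type} [CommRing R] [Fintype R] [DecidableEq R] {m n : ℕ}
    (H : Matrix (Fin m) (Fin n) R) (c : Fin n → R)
    (hc : ∀ j : Fin m, ∑ i : Fin n, c i * H j i = 0)
    (f : Fin n → {α : R // α ≠ 0} → ℝ)
    (w : (j : Fin m) → ({i : Fin n // H j i ≠ 0} → R) → ℝ)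
    (hQ : memQ H f w) : memQ H (Lf c f) (Lw H c w) := by
  obtain ⟨hw_nonneg, hw_sum, hf⟩ := hQ
  have hshift : ∀ j b, b + proj H j c ∈ SPC H j ↔ b ∈ SPC H j :=
    fun j => add_mem_SPC_iff (proj_mem_SPC H (hc j))
  have hf' : ∀ j i (α : {α : R // α ≠ 0}), f i.1 α = fiberMass (SPC H j) (w j) i α := hf
  refine ⟨fun j b hb => hw_nonneg j _ ((hshift j b).2 hb),
    fun j => (sum_ite_mem_comp_add (hshift j) (w j)).trans (hw_sum j), fun j i α => ?_⟩
  change Lf c f i.1 α = fiberMass (SPC H j) (fun b => w j (b + proj H j c)) i α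
  rw [fiberMass_comp_add (hshift j)]
  unfold Lf
  split_ifs with hα
  · have h0 : (α : R) + proj H j c i = 0 := by simp [proj, hα]
    have hmass := fiberMass_zero_add_sum_ne_zero (S := SPC H j) (w j) i
    rw [hw_sum j] at hmass
    simp only [hf' j i, h0]
    linarith
  · exact hf' j i _
end

section
/- Fix a codeword c ∈ C. The map L on the polytope Q defined by L(f,w) = (f̃, w̃) (with f̃_i^(α) = 1 − ∑_{γ≠0} f_i^(γ) if α = −c_i, f̃_i^(α) = f_i^(α+c_i) otherwise, and w̃_{j,r} = w_{j, r + x_j(c)}) is a bijection from Q to itself, with inverse given by f_i^(α) = 1 − ∑_{γ≠0} f̃_i^(γ) if α = c_i, f_i^(α) = f̃_i^(α−c_i) otherwise, and w_{j,b} = w̃_{j, b − x_j(c)}. -/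
open Finset
open scoped Classical

/-- The f-part of the inverse translation map. -/
def Linvf {R : Type} [CommRing R] [Fintype R] [DecidableEq R] {n : ℕ} (c : Fin n → R)
    (ft : Fin n → {α : R // α ≠ 0} → ℝ) : Fin n → {α : R // α ≠ 0} → ℝ :=
  fun i α =>
    if h : (α : R) = c i then 1 - ∑ γ : {γ : R // γ ≠ 0}, ft i γ
    else ft i ⟨(α : R) - c i, fun hz => h (sub_eq_zero.mp hz)⟩

/-- The w-part of the inverse translation map. -/
def Linvw {R : Type} [CommRing R] [DecidableEq R] {m n : ℕ} (H : Matrix (Fin m) (Fin n) R)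
    (c : Fin n → R)
    (wt : (j : Fin m) → ({i : Fin n // H j i ≠ 0} → R) → ℝ) :
    (j : Fin m) → ({i : Fin n // H j i ≠ 0} → R) → ℝ :=
  fun j b => wt j (b - proj H j c)

section Aux
variable {R : Type} [CommRing R] [Fintype R] [DecidableEq R] {m n : ℕ}
variable (H : Matrix (Fin m) (Fin n) R)

lemma spc_add (c : Fin n → R) (hc : ∀ j : Fin m, ∑ i : Fin n, c i * H j i = 0)
    (j : Fin m) (b : {i : Fin n // H j i ≠ 0} → R) :
    b + proj H j c ∈ SPC H j ↔ b ∈ SPC H j := by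
  have hp : ∑ i : {i : Fin n // H j i ≠ 0}, proj H j c i * H j i.1 = 0 := by
    have h1 : ∑ i : {i : Fin n // H j i ≠ 0}, c i.1 * H j i.1
        = ∑ i ∈ Finset.univ.filter (fun i => H j i ≠ 0), c i * H j i :=
      (Finset.sum_subtype (p := fun i => H j i ≠ 0)
        (Finset.univ.filter (fun i => H j i ≠ 0))
        (fun i => by simp) (fun i => c i * H j i)).symm
    have h2 : ∑ i ∈ Finset.univ.filter (fun i => H j i ≠ 0), c i * H j i
        = ∑ i : Fin n, c i * H j i := by
      rw [Finset.sum_filter_of_ne]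
      intro i _ h hz
      exact absurd (by rw [hz, mul_zero]) h
    simpa [proj, h1, h2] using hc j
  unfold SPC
  simp only [Set.mem_setOf_eq, Pi.add_apply, add_mul, Finset.sum_add_distrib, hp, add_zero]

end Aux

section Aux2
set_option linter.unusedSectionVars false
variable {R : Type} [CommRing R] [Fintype R] [DecidableEq R] {m n : ℕ}
variable (H : Matrix (Fin m) (Fin n) R)

lemma memQ_L (c : Fin n → R) (hc : ∀ j : Fin m, ∑ i : Fin n, c i * H j i = 0)
    {f : Fin n → {α : R // α ≠ 0} → ℝ}
    {w : (j : Fin m) → ({i : Fin n // H j i ≠ 0} → R) → ℝ}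
    (h : memQ H f w) : memQ H (Lf c f) (Lw H c w) := by
  obtain ⟨h0, h1, h2⟩ := h
  refine ⟨?_, ?_, ?_⟩
  · intro j b hb
    exact h0 j _ ((spc_add H c hc j b).mpr hb)
  · intro j
    rw [← h1 j]
    refine Fintype.sum_equiv (Equiv.addRight (proj H j c)) _ _ (fun r => ?_)
    simp only [Equiv.coe_addRight, Lw]
    exact (if_congr (spc_add H c hc j r) rfl rfl).symm
  · intro j i α
    have key : ∀ β : R, (∑ b : {i : Fin n // H j i ≠ 0} → R,
          (if b ∈ SPC H j ∧ b i = β then Lw H c w j b else 0))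
        = ∑ b : {i : Fin n // H j i ≠ 0} → R,
          (if b ∈ SPC H j ∧ b i = β + c i.1 then w j b else 0) := by
      intro β
      refine Fintype.sum_equiv (Equiv.addRight (proj H j c)) _ _ (fun r => ?_)
      simp only [Equiv.coe_addRight, Lw]
      have hiff : (r + proj H j c ∈ SPC H j ∧ (r + proj H j c) i = β + c i.1)
          ↔ (r ∈ SPC H j ∧ r i = β) := by
        rw [spc_add H c hc j r]
        simp [proj]
      exact (if_congr hiff rfl rfl).symm
    by_cases hα : (α : R) = -(c i.1)
    · rw [show Lf c f i.1 α = 1 - ∑ γ : {γ : R // γ ≠ 0}, f i.1 γ from dif_pos hα,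
        key α.1, show (α : R) + c i.1 = 0 from by rw [hα]; ring]
      -- let g β := ∑ b, if b ∈ SPC ∧ b i = β then w j b else 0
      set g : R → ℝ := fun β => ∑ b : {i : Fin n // H j i ≠ 0} → R,
        (if b ∈ SPC H j ∧ b i = β then w j b else 0) with hg
      have hsplit : ∑ β : R, g β = 1 := by
        rw [← h1 j, Finset.sum_comm]
        refine Finset.sum_congr rfl (fun b _ => ?_)
        have : ∀ β : R, (if b ∈ SPC H j ∧ b i = β then w j b else 0)
            = (if b i = β then (if b ∈ SPC H j then w j b else 0) else 0) := by
          intro β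
          by_cases hs : b ∈ SPC H j <;> by_cases hb : b i = β <;> simp [hs, hb]
        simp_rw [this]
        simp [Finset.sum_ite_eq]
      have hsub : ∑ β ∈ Finset.univ.erase (0 : R), g β
          = ∑ γ : {γ : R // γ ≠ 0}, g γ.1 :=
        Finset.sum_subtype (p := fun γ : R => γ ≠ 0) _ (fun x => by simp) g
      have hzero : g 0 + ∑ γ : {γ : R // γ ≠ 0}, g γ.1 = 1 := by
        rw [← hsub, Finset.add_sum_erase _ g (Finset.mem_univ 0), hsplit]
      have hγ : ∀ γ : {γ : R // γ ≠ 0}, g γ.1 = f i.1 γ := by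
        intro γ
        rw [h2 j i γ]
      rw [show (∑ γ : {γ : R // γ ≠ 0}, f i.1 γ) = ∑ γ : {γ : R // γ ≠ 0}, g γ.1 from
        (Finset.sum_congr rfl (fun γ _ => (hγ γ).symm))]
      linarith
    · rw [show Lf c f i.1 α = f i.1 ⟨(α : R) + c i.1,
          fun hz => hα (eq_neg_iff_add_eq_zero.mpr hz)⟩ from dif_neg hα,
        h2 j i ⟨(α : R) + c i.1, fun hz => hα (eq_neg_iff_add_eq_zero.mpr hz)⟩, key α.1]

end Aux2

section Aux3
set_option linter.unusedSectionVars false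
variable {R : Type} [CommRing R] [Fintype R] [DecidableEq R] {m n : ℕ}
variable (H : Matrix (Fin m) (Fin n) R)

lemma Linvf_eq_Lf_neg (c : Fin n → R) (f : Fin n → {α : R // α ≠ 0} → ℝ) :
    Linvf c f = Lf (-c) f := by
  funext i α
  unfold Linvf Lf
  by_cases h : (α : R) = c i
  · rw [dif_pos h, dif_pos (by simpa using h)]
  · rw [dif_neg h, dif_neg (by simpa using h)]
    exact congrArg (f i) (Subtype.ext (by simp [sub_eq_add_neg]))

lemma Lf_eq_Linvf_neg (c : Fin n → R) (f : Fin n → {α : R // α ≠ 0} → ℝ) :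
    Lf c f = Linvf (-c) f := by
  rw [Linvf_eq_Lf_neg, neg_neg]

lemma Linvw_eq_Lw_neg (c : Fin n → R)
    (w : (j : Fin m) → ({i : Fin n // H j i ≠ 0} → R) → ℝ) :
    Linvw H c w = Lw H (-c) w := by
  funext j b
  unfold Linvw Lw
  congr 1
  funext i
  simp [proj, sub_eq_add_neg]

lemma Lw_eq_Linvw_neg (c : Fin n → R)
    (w : (j : Fin m) → ({i : Fin n // H j i ≠ 0} → R) → ℝ) :
    Lw H c w = Linvw H (-c) w := by
  rw [Linvw_eq_Lw_neg, neg_neg]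

lemma Linvw_Lw (c : Fin n → R)
    (w : (j : Fin m) → ({i : Fin n // H j i ≠ 0} → R) → ℝ) :
    Linvw H c (Lw H c w) = w := by
  funext j b
  unfold Linvw Lw
  congr 1
  simp

lemma Lw_Linvw (c : Fin n → R)
    (w : (j : Fin m) → ({i : Fin n // H j i ≠ 0} → R) → ℝ) :
    Lw H c (Linvw H c w) = w := by
  funext j b
  unfold Linvw Lw
  congr 1
  simp

end Aux3

section Aux4
set_option linter.unusedSectionVars false
variable {R : Type} [CommRing R] [Fintype R] [DecidableEq R] {m n : ℕ}

lemma Linvf_Lf (c : Fin n → R) (f : Fin n → {α : R // α ≠ 0} → ℝ) :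
    Linvf c (Lf c f) = f := by
  funext i α
  by_cases hci : c i = 0
  · have hα : (α : R) ≠ c i := by rw [hci]; exact α.2
    rw [show Linvf c (Lf c f) i α = Lf c f i ⟨(α : R) - c i,
        fun hz => hα (sub_eq_zero.mp hz)⟩ from dif_neg hα]
    have h2 : ((⟨(α : R) - c i, fun hz => hα (sub_eq_zero.mp hz)⟩ :
        {β : R // β ≠ 0}) : R) ≠ -(c i) := by
      simp only [hci, neg_zero, sub_zero]
      exact α.2
    rw [show Lf c f i ⟨(α : R) - c i, fun hz => hα (sub_eq_zero.mp hz)⟩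
        = f i ⟨(α : R) - c i + c i, _⟩ from dif_neg h2]
    exact congrArg (f i) (Subtype.ext (by simp))
  · -- key: sum of Lf values
    have hS : ∑ γ : {γ : R // γ ≠ 0}, Lf c f i γ
        = 1 - f i ⟨c i, hci⟩ := by
      set a : {γ : R // γ ≠ 0} := ⟨-(c i), neg_ne_zero.mpr hci⟩ with ha
      rw [← Finset.add_sum_erase _ _ (Finset.mem_univ a)]
      have hLa : Lf c f i a = 1 - ∑ γ : {γ : R // γ ≠ 0}, f i γ := dif_pos rfl
      have hrest : ∑ γ ∈ Finset.univ.erase a, Lf c f i γ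
          = ∑ δ ∈ Finset.univ.erase (⟨c i, hci⟩ : {γ : R // γ ≠ 0}), f i δ := by
        refine Finset.sum_bij'
          (fun γ hγ => ⟨(γ : R) + c i, fun hz => (Finset.ne_of_mem_erase hγ)
            (Subtype.ext (eq_neg_iff_add_eq_zero.mpr hz))⟩)
          (fun δ hδ => ⟨(δ : R) - c i, fun hz => (Finset.ne_of_mem_erase hδ)
            (Subtype.ext (sub_eq_zero.mp hz))⟩)
          ?_ ?_ ?_ ?_ ?_
        · intro γ hγ
          refine Finset.mem_erase.mpr ⟨fun he => γ.2 ?_, Finset.mem_univ _⟩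
          have := congrArg Subtype.val he
          simpa using this
        · intro δ hδ
          refine Finset.mem_erase.mpr ⟨fun he => δ.2 ?_, Finset.mem_univ _⟩
          have := congrArg Subtype.val he
          simp only at this
          rw [show (δ : R) = (δ : R) - c i + c i by ring, this]
          simp [ha]
        · intro γ hγ; exact Subtype.ext (by simp)
        · intro δ hδ; exact Subtype.ext (by simp)
        · intro γ hγ
          have hne : (γ : R) ≠ -(c i) := fun hz =>
            (Finset.ne_of_mem_erase hγ) (Subtype.ext hz)
          exact dif_neg hne
      rw [hLa, hrest, ← Finset.add_sum_erase _ (fun δ => f i δ)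
        (Finset.mem_univ (⟨c i, hci⟩ : {γ : R // γ ≠ 0}))]
      ring
    by_cases hα : (α : R) = c i
    · rw [show Linvf c (Lf c f) i α
          = 1 - ∑ γ : {γ : R // γ ≠ 0}, Lf c f i γ from dif_pos hα, hS]
      have : α = (⟨c i, hci⟩ : {γ : R // γ ≠ 0}) := Subtype.ext hα
      rw [this]
      ring
    · rw [show Linvf c (Lf c f) i α = Lf c f i ⟨(α : R) - c i,
          fun hz => hα (sub_eq_zero.mp hz)⟩ from dif_neg hα]
      have h2 : ((α : R) - c i) ≠ -(c i) := fun hz => α.2 (by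
        have : (α : R) = -(c i) + c i := by rw [← hz]; ring
        simpa using this)
      rw [show Lf c f i ⟨(α : R) - c i, fun hz => hα (sub_eq_zero.mp hz)⟩
          = f i ⟨(α : R) - c i + c i, _⟩ from dif_neg h2]
      exact congrArg (f i) (Subtype.ext (by simp))

lemma Lf_Linvf (c : Fin n → R) (f : Fin n → {α : R // α ≠ 0} → ℝ) :
    Lf c (Linvf c f) = f := by
  rw [Linvf_eq_Lf_neg, Lf_eq_Linvf_neg]
  exact Linvf_Lf (-c) f

end Aux4
/-- L is a bijection from the polytope Q to itself, with the stated inverse. -/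
theorem L_bijOn_Q {R : Type} [CommRing R] [Fintype R] [DecidableEq R] {m n : ℕ}
    (H : Matrix (Fin m) (Fin n) R) (c : Fin n → R)
    (hc : ∀ j : Fin m, ∑ i : Fin n, c i * H j i = 0) :
    Set.BijOn
      (fun p : (Fin n → {α : R // α ≠ 0} → ℝ) ×
          ((j : Fin m) → ({i : Fin n // H j i ≠ 0} → R) → ℝ) =>
        (Lf c p.1, Lw H c p.2))
      {p | memQ H p.1 p.2} {p | memQ H p.1 p.2} ∧
    Set.InvOn
      (fun p : (Fin n → {α : R // α ≠ 0} → ℝ) ×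
          ((j : Fin m) → ({i : Fin n // H j i ≠ 0} → R) → ℝ) =>
        (Linvf c p.1, Linvw H c p.2))
      (fun p => (Lf c p.1, Lw H c p.2))
      {p | memQ H p.1 p.2} {p | memQ H p.1 p.2} := by
  have hcneg : ∀ j : Fin m, ∑ i : Fin n, (-c) i * H j i = 0 := by
    intro j
    have : ∑ i : Fin n, (-c) i * H j i = -∑ i : Fin n, c i * H j i := by
      rw [← Finset.sum_neg_distrib]
      exact Finset.sum_congr rfl (fun i _ => by simp)
    rw [this, hc j, neg_zero]
  have hmapsL : Set.MapsTo
      (fun p : (Fin n → {α : R // α ≠ 0} → ℝ) ×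
          ((j : Fin m) → ({i : Fin n // H j i ≠ 0} → R) → ℝ) =>
        (Lf c p.1, Lw H c p.2))
      {p | memQ H p.1 p.2} {p | memQ H p.1 p.2} :=
    fun p hp => memQ_L H c hc hp
  have hmapsInv : Set.MapsTo
      (fun p : (Fin n → {α : R // α ≠ 0} → ℝ) ×
          ((j : Fin m) → ({i : Fin n // H j i ≠ 0} → R) → ℝ) =>
        (Linvf c p.1, Linvw H c p.2))
      {p | memQ H p.1 p.2} {p | memQ H p.1 p.2} := by
    intro p hp
    have := memQ_L H (-c) hcneg hp
    simpa only [Set.mem_setOf_eq, ← Linvf_eq_Lf_neg, ← Linvw_eq_Lw_neg] using this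
  have hinv : Set.InvOn
      (fun p : (Fin n → {α : R // α ≠ 0} → ℝ) ×
          ((j : Fin m) → ({i : Fin n // H j i ≠ 0} → R) → ℝ) =>
        (Linvf c p.1, Linvw H c p.2))
      (fun p => (Lf c p.1, Lw H c p.2))
      {p | memQ H p.1 p.2} {p | memQ H p.1 p.2} :=
    ⟨fun p _ => Prod.ext (Linvf_Lf c p.1) (Linvw_Lw H c p.2),
     fun p _ => Prod.ext (Lf_Linvf c p.1) (Lw_Linvw H c p.2)⟩
  exact ⟨hinv.bijOn hmapsL hmapsInv, hinv⟩
end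

section
/- Fix a coordinate i with c_i = β and let λ_i, λ̃_i be the log-likelihood-ratio vectors for y_i and ỹ_i = τ_β(y_i) respectively. For any f_i ∈ ℝ^(q-1), define f̃_i by f̃_i^(α) = 1 − ∑_{γ≠0} f_i^(γ) if α = −β and f̃_i^(α) = f_i^(α+β) otherwise. Then λ_i·f_i − λ_i·ξ(β) = λ̃_i·f̃_i − λ̃_i·ξ(0), i.e., the per-coordinate relative LP cost is preserved. -/
open Finset

/-- The indicator vector ξ(β) over the nonzero elements of R. -/
def xi {R : Type} [Ring R] [DecidableEq R] (β : R) : {γ : R // γ ≠ 0} → ℝ :=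
  fun γ => if (γ : R) = β then 1 else 0

/-- The per-coordinate translation of an LP variable block by β. -/
def tilf {R : Type} [CommRing R] [Fintype R] [DecidableEq R] (β : R)
    (f : {α : R // α ≠ 0} → ℝ) : {α : R // α ≠ 0} → ℝ :=
  fun α =>
    if h : (α : R) = -β then 1 - ∑ γ : {γ : R // γ ≠ 0}, f γ
    else f ⟨(α : R) + β, fun hz => h (eq_neg_iff_add_eq_zero.mpr hz)⟩

/-- The per-coordinate relative LP cost is preserved by the translation map:
λ_i·f_i − λ_i·ξ(β) = λ̃_i·f̃_i − λ̃_i·ξ(0). -/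
theorem per_coordinate_cost_preserved {R : Type} [CommRing R] [Fintype R] [DecidableEq R]
    {S : Type} (p : R → S → ℝ) (hp : ∀ (α : R) (y : S), 0 < p α y)
    (τ : R → S → S) (hbij : ∀ β : R, Function.Bijective (τ β))
    (hsym : ∀ (β : R) (y : S) (α : R), p α y = p (α - β) (τ β y))
    (y : S) (β : R) (f : {α : R // α ≠ 0} → ℝ) :
    (∑ α : {α : R // α ≠ 0}, Real.log (p 0 y / p α y) * f α) -
      (∑ α : {α : R // α ≠ 0}, Real.log (p 0 y / p α y) * xi β α) =
    (∑ α : {α : R // α ≠ 0}, Real.log (p 0 (τ β y) / p α (τ β y)) * tilf β f α) -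
      (∑ α : {α : R // α ≠ 0},
        Real.log (p 0 (τ β y) / p α (τ β y)) * xi (0 : R) α) := by
  have hne : ∀ (α : R) (s : S), p α s ≠ 0 := fun α s => (hp α s).ne'
  set L : R → ℝ := fun γ => Real.log (p γ y) with hL
  have hp0 : p 0 (τ β y) = p β y := by simpa using (hsym β y β).symm
  have hpα : ∀ α : R, p α (τ β y) = p (α + β) y := fun α => by
    simpa using (hsym β y (α + β)).symm
  have hlog1 : ∀ α : R, Real.log (p 0 y / p α y) = L 0 - L α := fun α =>
    Real.log_div (hne 0 y) (hne α y)
  have hlog2 : ∀ α : R, Real.log (p 0 (τ β y) / p α (τ β y)) = L β - L (α + β) := fun α => by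
    rw [hp0, hpα, Real.log_div (hne β y) (hne (α + β) y)]
  simp only [hlog1, hlog2]
  have hxi0 : ∀ g : {α : R // α ≠ 0} → ℝ,
      ∑ α : {α : R // α ≠ 0}, g α * xi (0 : R) α = 0 := by
    intro g; apply Finset.sum_eq_zero; intro α _; simp [xi, α.2]
  rw [hxi0, sub_zero]
  rcases eq_or_ne β 0 with rfl | hβ
  · rw [hxi0, sub_zero]
    apply Finset.sum_congr rfl
    intro α _
    have h1 : tilf (0 : R) f α = f α := by
      have hα : (α : R) ≠ -0 := by simpa using α.2
      rw [tilf, dif_neg hα]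
      congr 1
      exact Subtype.ext (add_zero _)
    rw [h1, add_zero]
  · have hnβ : (-β : R) ≠ 0 := neg_ne_zero.mpr hβ
    set bβ : {α : R // α ≠ 0} := ⟨β, hβ⟩ with hbβ
    set bn : {α : R // α ≠ 0} := ⟨-β, hnβ⟩ with hbn
    have hxiβ : ∑ α : {α : R // α ≠ 0}, (L 0 - L α) * xi β α = L 0 - L β := by
      rw [Finset.sum_eq_single bβ]
      · simp [xi, hbβ]
      · intro b _ hb
        have : (b : R) ≠ β := fun h => hb (Subtype.ext h)
        simp [xi, this]
      · intro h; exact absurd (Finset.mem_univ _) h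
    rw [hxiβ]
    -- split RHS at bn
    rw [← Finset.sum_erase_add _ (fun α : {α : R // α ≠ 0} =>
      (L β - L ((α : R) + β)) * tilf β f α) (Finset.mem_univ bn)]
    -- split LHS at bβ
    rw [← Finset.sum_erase_add _ (fun α : {α : R // α ≠ 0} =>
      (L 0 - L (α : R)) * f α) (Finset.mem_univ bβ)]
    have htn : tilf β f bn = 1 - ∑ γ : {γ : R // γ ≠ 0}, f γ := by
      rw [tilf, dif_pos]; rfl
    have hreindex :
        ∑ α ∈ Finset.univ.erase bn, (L β - L ((α : R) + β)) * tilf β f α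
          = ∑ γ ∈ Finset.univ.erase bβ, (L β - L (γ : R)) * f γ := by
      refine Finset.sum_bij'
        (fun (α : {α : R // α ≠ 0}) (ha : α ∈ Finset.univ.erase bn) =>
          (⟨(α : R) + β, fun h =>
            (Finset.ne_of_mem_erase ha)
              (Subtype.ext (eq_neg_of_add_eq_zero_left h))⟩ : {α : R // α ≠ 0}))
        (fun (γ : {α : R // α ≠ 0}) (hg : γ ∈ Finset.univ.erase bβ) =>
          (⟨(γ : R) - β, fun h =>
            (Finset.ne_of_mem_erase hg) (Subtype.ext (by
              have := sub_eq_zero.mp h; simpa using this))⟩ : {α : R // α ≠ 0}))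
        ?g1 ?g2 ?g3 ?g4 ?g5
      case g1 =>
        intro a ha
        refine Finset.mem_erase.mpr ⟨?_, Finset.mem_univ _⟩
        intro h
        have : (a : R) + β = β := by simpa [hbβ] using congrArg Subtype.val h
        exact a.2 (by linear_combination this)
      case g2 =>
        intro a ha
        refine Finset.mem_erase.mpr ⟨?_, Finset.mem_univ _⟩
        intro h
        have : (a : R) - β = -β := by simpa [hbn] using congrArg Subtype.val h
        exact a.2 (by linear_combination this)
      case g3 => intro a ha; exact Subtype.ext (by simp)
      case g4 => intro a ha; exact Subtype.ext (by simp)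
      case g5 =>
        intro a ha
        have hne' : (a : R) ≠ -β := fun h =>
          (Finset.ne_of_mem_erase ha) (Subtype.ext h)
        rw [tilf, dif_neg hne']
    rw [hreindex, htn]
    have hsum : (∑ γ : {γ : R // γ ≠ 0}, f γ)
        = (∑ γ ∈ Finset.univ.erase bβ, f γ) + f bβ :=
      (Finset.sum_erase_add _ _ (Finset.mem_univ bβ)).symm
    rw [hsum]
    have hsplit : ∑ γ ∈ Finset.univ.erase bβ, (L 0 - L (γ : R)) * f γ
        = (∑ γ ∈ Finset.univ.erase bβ, (L β - L (γ : R)) * f γ)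
          + (L 0 - L β) * ∑ γ ∈ Finset.univ.erase bβ, f γ := by
      rw [Finset.mul_sum, ← Finset.sum_add_distrib]
      apply Finset.sum_congr rfl
      intro γ _; ring
    rw [hsplit]
    have : L ((-β : R) + β) = L 0 := by rw [neg_add_cancel]
    rw [show ((bn : R) + β) = 0 by simp [hbn]]
    simp only [hbβ]
    ring
end

section
/- Under the channel symmetry condition, for any codeword c ∈ C and any (f,w) ∈ Q with image (f̃,w̃) = L(f,w), the global LP costs satisfy λ·f^T − λ·Ξ(c)^T = λ̃·f̃^T − λ̃·Ξ(0)^T, where λ̃ is the log-likelihood vector for the translated observation ỹ = G(y) with ỹ_i = τ_{c_i}(y_i). -/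
open Finset
open scoped Classical

/-- The indicator embedding Ξ of R^n. -/
def Xi {R : Type} [Ring R] [DecidableEq R] {n : ℕ} (c : Fin n → R) :
    Fin n → {γ : R // γ ≠ 0} → ℝ :=
  fun i γ => if (γ : R) = c i then 1 else 0

/-- The global LP cost λ·f for log-likelihood ratios λ computed from y. -/
noncomputable def LPcost {R : Type} [CommRing R] [Fintype R] [DecidableEq R] {n : ℕ}
    {S : Type} (p : R → S → ℝ) (y : Fin n → S)
    (f : Fin n → {α : R // α ≠ 0} → ℝ) : ℝ :=
  ∑ i : Fin n, ∑ α : {α : R // α ≠ 0},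
    Real.log (p 0 (y i) / p (α : R) (y i)) * f i α

lemma key_cost {R : Type} [CommRing R] [Fintype R] [DecidableEq R] (L : R → ℝ) (β : R)
    (hβ : β ≠ 0) (f : {α : R // α ≠ 0} → ℝ) :
    (∑ α : {α : R // α ≠ 0}, (L 0 - L α) * f α) - (L 0 - L β)
  = ∑ α : {α : R // α ≠ 0}, (L β - L ((α:R) + β)) *
      (if h : (α : R) = -β then 1 - ∑ γ : {γ : R // γ ≠ 0}, f γ
       else f ⟨(α:R) + β, fun hz => h (eq_neg_iff_add_eq_zero.mpr hz)⟩) := by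
  set g : R → ℝ := fun γ => if h : γ = 0 then 0 else f ⟨γ, h⟩ with hg
  have hgf : ∀ α : {α : R // α ≠ 0}, g (α : R) = f α := by
    intro α; simp [hg, α.2]
  have hsub : ∀ F : R → ℝ, (∑ α : {α : R // α ≠ 0}, F (α : R)) = ∑ γ ∈ univ.erase 0, F γ := by
    intro F
    exact (Finset.sum_subtype (univ.erase 0) (by simp) F).symm
  have hT : (∑ γ : {γ : R // γ ≠ 0}, f γ) = ∑ γ : R, g γ := by
    rw [show (∑ γ : {γ : R // γ ≠ 0}, f γ) = ∑ γ : {γ : R // γ ≠ 0}, g (γ:R) from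
      (Finset.sum_congr rfl fun γ _ => (hgf γ).symm), hsub g]
    rw [Finset.sum_erase]
    simp [hg]
  have hLHS : (∑ α : {α : R // α ≠ 0}, (L 0 - L α) * f α)
      = ∑ γ : R, (L 0 - L γ) * g γ := by
    rw [show (∑ α : {α : R // α ≠ 0}, (L 0 - L α) * f α)
        = ∑ α : {α : R // α ≠ 0}, (L 0 - L (α:R)) * g (α:R) from
      Finset.sum_congr rfl fun α _ => by rw [hgf], hsub fun a => (L 0 - L a) * g a]
    rw [Finset.sum_erase]
    simp [hg]
  -- RHS
  have hRHS : (∑ α : {α : R // α ≠ 0}, (L β - L ((α:R) + β)) *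
      (if h : (α : R) = -β then 1 - ∑ γ : {γ : R // γ ≠ 0}, f γ
       else f ⟨(α:R) + β, fun hz => h (eq_neg_iff_add_eq_zero.mpr hz)⟩))
      = (L β - L 0) * (1 - ∑ γ : R, g γ) + ∑ γ : R, (L β - L γ) * g γ := by
    rw [hsub fun a => (L β - L (a + β)) *
      (if h : a = -β then 1 - ∑ γ : {γ : R // γ ≠ 0}, f γ
       else f ⟨a + β, fun hz => h (eq_neg_iff_add_eq_zero.mpr hz)⟩)]
    have hmem : (-β) ∈ univ.erase (0:R) := by simp [neg_ne_zero.mpr hβ]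
    rw [← Finset.sum_erase_add _ _ hmem]
    have h1 : (∑ a ∈ (univ.erase (0:R)).erase (-β), (L β - L (a + β)) *
        (if h : a = -β then 1 - ∑ γ : {γ : R // γ ≠ 0}, f γ
         else f ⟨a + β, fun hz => h (eq_neg_iff_add_eq_zero.mpr hz)⟩))
        = ∑ a ∈ (univ.erase (0:R)).erase (-β), (L β - L (a + β)) * g (a + β) := by
      refine Finset.sum_congr rfl fun a ha => ?_
      have hne : a ≠ -β := (Finset.mem_erase.mp ha).1
      have hne2 : a + β ≠ 0 := fun hz => hne (eq_neg_iff_add_eq_zero.mpr hz)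
      rw [dif_neg hne, hg]
      simp [hne2]
    rw [h1]
    have h2 : (∑ a ∈ (univ.erase (0:R)).erase (-β), (L β - L (a + β)) * g (a + β))
        = ∑ a : R, (L β - L (a + β)) * g (a + β) := by
      rw [Finset.sum_erase_eq_sub hmem, Finset.sum_erase_eq_sub (Finset.mem_univ 0)]
      simp [hg]
    rw [h2]
    have h3 : (∑ a : R, (L β - L (a + β)) * g (a + β)) = ∑ γ : R, (L β - L γ) * g γ :=
      Fintype.sum_equiv (Equiv.addRight β) _ _ (fun a => rfl)
    rw [h3, dif_pos rfl, neg_add_cancel, hT]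
    ring
  have hS : (∑ γ : R, (L β - L γ) * g γ)
      = (∑ γ : R, (L 0 - L γ) * g γ) + (L β - L 0) * ∑ γ : R, g γ := by
    rw [Finset.mul_sum, ← Finset.sum_add_distrib]
    exact Finset.sum_congr rfl fun γ _ => by ring
  rw [hLHS, hRHS, hS]
  ring

/-- Under the channel symmetry condition, the translation map L preserves the
relative LP cost: λ·f − λ·Ξ(c) = λ̃·f̃ − λ̃·Ξ(0). -/
theorem global_cost_preserved {R : Type} [CommRing R] [Fintype R] [DecidableEq R]
    {m n : ℕ} (H : Matrix (Fin m) (Fin n) R) (c : Fin n → R)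
    (hc : ∀ j : Fin m, ∑ i : Fin n, c i * H j i = 0)
    {S : Type} (p : R → S → ℝ) (hp : ∀ (α : R) (y : S), 0 < p α y)
    (τ : R → S → S) (hbij : ∀ β : R, Function.Bijective (τ β))
    (hsym : ∀ (β : R) (y : S) (α : R), p α y = p (α - β) (τ β y))
    (y : Fin n → S)
    (f : Fin n → {α : R // α ≠ 0} → ℝ)
    (w : (j : Fin m) → ({i : Fin n // H j i ≠ 0} → R) → ℝ)
    (hQ : memQ H f w) :
    LPcost p y f - LPcost p y (Xi c) =
      LPcost p (fun i => τ (c i) (y i)) (Lf c f) -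
        LPcost p (fun i => τ (c i) (y i)) (Xi (0 : Fin n → R)) := by
  classical
  unfold LPcost
  rw [← Finset.sum_sub_distrib, ← Finset.sum_sub_distrib]
  refine Finset.sum_congr rfl fun i _ => ?_
  set L : R → ℝ := fun γ => Real.log (p γ (y i)) with hL
  have hlog1 : ∀ α : R, Real.log (p 0 (y i) / p α (y i)) = L 0 - L α := fun α =>
    Real.log_div (hp 0 (y i)).ne' (hp α (y i)).ne'
  have hpv : ∀ α : R, p α (τ (c i) (y i)) = p (α + c i) (y i) := by
    intro α
    have h := hsym (c i) (y i) (α + c i)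
    rw [add_sub_cancel_right] at h
    exact h.symm
  have hlog2 : ∀ α : R,
      Real.log (p 0 (τ (c i) (y i)) / p α (τ (c i) (y i))) = L (c i) - L (α + c i) := by
    intro α
    rw [hpv 0, hpv α, zero_add]
    exact Real.log_div (hp _ _).ne' (hp _ _).ne'
  have e1 : (∑ α : {α : R // α ≠ 0}, Real.log (p 0 (y i) / p (α:R) (y i)) * f i α)
      = ∑ α : {α : R // α ≠ 0}, (L 0 - L (α:R)) * f i α :=
    Finset.sum_congr rfl fun α _ => by rw [hlog1]
  have e4 : (∑ α : {α : R // α ≠ 0},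
      Real.log (p 0 (τ (c i) (y i)) / p (α:R) (τ (c i) (y i))) * Xi (0 : Fin n → R) i α) = 0 := by
    refine Finset.sum_eq_zero fun α _ => ?_
    have : Xi (0 : Fin n → R) i α = 0 := by simp [Xi, α.2]
    rw [this, mul_zero]
  have e3 : (∑ α : {α : R // α ≠ 0},
      Real.log (p 0 (τ (c i) (y i)) / p (α:R) (τ (c i) (y i))) * Lf c f i α)
      = ∑ α : {α : R // α ≠ 0}, (L (c i) - L ((α:R) + c i)) * Lf c f i α :=
    Finset.sum_congr rfl fun α _ => by rw [hlog2]
  rw [e1, e4, e3, sub_zero]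
  rcases eq_or_ne (c i) 0 with h0 | h0
  · have e2 : (∑ α : {α : R // α ≠ 0}, Real.log (p 0 (y i) / p (α:R) (y i)) * Xi c i α) = 0 := by
      refine Finset.sum_eq_zero fun α _ => ?_
      have : Xi c i α = 0 := by
        simp only [Xi, h0]
        simp [α.2]
      rw [this, mul_zero]
    rw [e2, sub_zero]
    refine Finset.sum_congr rfl fun α _ => ?_
    have h1 : ((α:R)) ≠ -(c i) := by rw [h0, neg_zero]; exact α.2
    have hLf : Lf c f i α = f i α := by
      simp only [Lf]
      rw [dif_neg h1]
      exact congrArg (f i) (Subtype.ext (show (α:R) + c i = (α:R) by rw [h0, add_zero]))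
    rw [hLf, h0, add_zero]
  · have e2 : (∑ α : {α : R // α ≠ 0}, Real.log (p 0 (y i) / p (α:R) (y i)) * Xi c i α)
        = L 0 - L (c i) := by
      rw [show (∑ α : {α : R // α ≠ 0}, Real.log (p 0 (y i) / p (α:R) (y i)) * Xi c i α)
          = ∑ α : {α : R // α ≠ 0}, (L 0 - L (α:R)) * Xi c i α from
        Finset.sum_congr rfl fun α _ => by rw [hlog1]]
      rw [Finset.sum_eq_single (⟨c i, h0⟩ : {α : R // α ≠ 0})]
      · simp [Xi]
      · intro b _ hb
        have hbc : (b : R) ≠ c i := fun h => hb (Subtype.ext h)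
        simp [Xi, hbc]
      · intro h; exact absurd (Finset.mem_univ _) h
    rw [e2]
    simp only [Lf]
    exact key_cost L (c i) h0 (f i)
end

section
/- Under the channel symmetry condition, the linear program with cost λ (from observation y) has a feasible point (f,w) ∈ Q with f ≠ Ξ(c) and λ·f^T ≤ λ·Ξ(c)^T if and only if the linear program with cost λ̃ (from observation ỹ = G(y)) has a feasible point (f̃,w̃) ∈ Q with f̃ ≠ Ξ(0) and λ̃·f̃^T ≤ λ̃·Ξ(0)^T. Consequently, the LP-decoding error set satisfies G(B(c)) = B(0). -/
open Finset
open scoped Classical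

/-- The LP-decoding error set B(c): channel outputs for which some feasible
point f ≠ Ξ(c) has cost no larger than that of Ξ(c). -/
def Bset {R : Type} [CommRing R] [Fintype R] [DecidableEq R] {m n : ℕ}
    (H : Matrix (Fin m) (Fin n) R) {S : Type} (p : R → S → ℝ)
    (c : Fin n → R) : Set (Fin n → S) :=
  {y | ∃ (f : Fin n → {α : R // α ≠ 0} → ℝ)
      (w : (j : Fin m) → ({i : Fin n // H j i ≠ 0} → R) → ℝ),
    memQ H f w ∧ f ≠ Xi c ∧ LPcost p y f ≤ LPcost p y (Xi c)}

/-!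
Complete each `f i` to a vector `fbar f i` on all of `R` by giving `0` the mass
`1 - ∑ α, f i α`. In these coordinates `Lf c` is the translation `fbar f i ↦ fbar f i (· + c i)`,
with inverse `Lf (-c)`, and it sends `Xi c` to `Xi 0`; shifting the local weights by the
projection of the codeword `c` keeps them on the local codes, so `(Lf c, Lw H c)` maps `Q` to
itself. Channel symmetry turns the log-likelihood ratios at `G y` into those at `y`, shifted by
`c i` and offset by the ratio at `c i`, so the cost of `Lf c f` at `G y` is
`λ·f - λ·Xi c`. Hence `B(c) = G⁻¹(B(0))`, and surjectivity of `G` gives `G(B(c)) = B(0)`.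
-/

lemma log_ratio_translate {R S : Type} [AddGroup R] {p : R → S → ℝ} {τ : R → S → S}
    (hp : ∀ (α : R) (y : S), 0 < p α y)
    (hsym : ∀ (β : R) (y : S) (α : R), p α y = p (α - β) (τ β y)) (β α : R) (s : S) :
    Real.log (p 0 (τ β s) / p (α - β) (τ β s))
      = Real.log (p 0 s / p α s) - Real.log (p 0 s / p β s) := by
  have h0 : p 0 (τ β s) = p β s := by rw [hsym β s β, sub_self]
  rw [h0, ← hsym, Real.log_div (hp _ _).ne' (hp _ _).ne', Real.log_div (hp _ _).ne' (hp _ _).ne',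
    Real.log_div (hp _ _).ne' (hp _ _).ne']
  ring

lemma sum_proj_mul {R : Type} [CommRing R] [DecidableEq R] {m n : ℕ}
    (H : Matrix (Fin m) (Fin n) R) (j : Fin m) (c : Fin n → R) :
    ∑ i : {i : Fin n // H j i ≠ 0}, proj H j c i * H j i = ∑ i, c i * H j i := by
  simp only [proj]
  rw [← Finset.sum_subtype (Finset.univ.filter fun i => H j i ≠ 0) (by simp)
    (fun i => c i * H j i)]
  exact Finset.sum_filter_of_ne fun i _ h hH => h (by rw [hH, mul_zero])

lemma add_proj_mem_SPC_iff {R : Type} [CommRing R] [DecidableEq R] {m n : ℕ}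
    (H : Matrix (Fin m) (Fin n) R) {j : Fin m} {c : Fin n → R} (hc : ∑ i, c i * H j i = 0)
    (b : {i : Fin n // H j i ≠ 0} → R) : b + proj H j c ∈ SPC H j ↔ b ∈ SPC H j := by
  simp only [SPC, Set.mem_ofPred_eq, Pi.add_apply, add_mul, Finset.sum_add_distrib,
    sum_proj_mul, hc, add_zero]

variable {R : Type} [CommRing R] [Fintype R] [DecidableEq R] {n : ℕ}

lemma sum_ne_zero_eq_sum_sub (g : R → ℝ) :
    ∑ α : {α : R // α ≠ 0}, g α = ∑ β, g β - g 0 := by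
  rw [Fintype.sum_eq_add_sum_subtype_ne g 0]
  ring

noncomputable def fbar (f : Fin n → {α : R // α ≠ 0} → ℝ) (i : Fin n) (β : R) : ℝ :=
  if h : β = 0 then 1 - ∑ γ : {γ : R // γ ≠ 0}, f i γ else f i ⟨β, h⟩

lemma fbar_of_ne_zero (f : Fin n → {α : R // α ≠ 0} → ℝ) (i : Fin n) (α : {α : R // α ≠ 0}) :
    fbar f i α = f i α :=
  dif_neg α.2

lemma sum_fbar (f : Fin n → {α : R // α ≠ 0} → ℝ) (i : Fin n) : ∑ β, fbar f i β = 1 := by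
  have h := sum_ne_zero_eq_sum_sub (fbar f i)
  simp only [fbar_of_ne_zero] at h
  rw [fbar, dif_pos rfl] at h
  linarith

lemma fbar_eq_of_sum_eq_one {f : Fin n → {α : R // α ≠ 0} → ℝ} {i : Fin n} {g : R → ℝ}
    (hg : ∑ β, g β = 1) (hf : ∀ α : {α : R // α ≠ 0}, f i α = g α) : fbar f i = g := by
  funext β
  by_cases hβ : β = 0
  · subst hβ
    rw [fbar, dif_pos rfl, Fintype.sum_congr _ _ hf, sum_ne_zero_eq_sum_sub, hg]
    ring
  · exact (fbar_of_ne_zero f i ⟨β, hβ⟩).trans (hf _)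

lemma fbar_Xi (d : Fin n → R) (i : Fin n) :
    fbar (Xi d) i = fun β => if β = d i then 1 else 0 :=
  fbar_eq_of_sum_eq_one (by simp) fun _ => rfl

lemma Lf_apply (c : Fin n → R) (f : Fin n → {α : R // α ≠ 0} → ℝ) (i : Fin n)
    (α : {α : R // α ≠ 0}) : Lf c f i α = fbar f i (α + c i) := by
  by_cases h : (α : R) = -c i
  · rw [Lf, dif_pos h, fbar, dif_pos (by rw [h, neg_add_cancel])]
  · rw [Lf, dif_neg h, fbar, dif_neg (fun h' => h (eq_neg_of_add_eq_zero_left h'))]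

lemma fbar_Lf (c : Fin n → R) (f : Fin n → {α : R // α ≠ 0} → ℝ) (i : Fin n) :
    fbar (Lf c f) i = fun β => fbar f i (β + c i) :=
  fbar_eq_of_sum_eq_one ((Equiv.sum_comp (Equiv.addRight (c i)) (fbar f i)).trans (sum_fbar f i))
    (Lf_apply c f i)

lemma Lf_neg_Lf (c : Fin n → R) (f : Fin n → {α : R // α ≠ 0} → ℝ) : Lf (-c) (Lf c f) = f := by
  funext i α
  simp only [Lf_apply, fbar_Lf, Pi.neg_apply, neg_add_cancel_right, fbar_of_ne_zero]

lemma Lf_injective (c : Fin n → R) : Function.Injective (Lf c) :=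
  Function.LeftInverse.injective (g := Lf (-c)) (Lf_neg_Lf c)

lemma Lf_Xi (c : Fin n → R) : Lf c (Xi c) = Xi 0 := by
  funext i α
  rw [Lf_apply, fbar_Xi]
  simp [Xi, α.2]

lemma sum_mul_eq_sum_mul_fbar (f : Fin n → {α : R // α ≠ 0} → ℝ) (i : Fin n) {g : R → ℝ}
    (hg : g 0 = 0) : ∑ α : {α : R // α ≠ 0}, g α * f i α = ∑ β, g β * fbar f i β := by
  rw [Fintype.sum_eq_add_sum_subtype_ne _ (0 : R), hg, zero_mul, zero_add]
  simp only [fbar_of_ne_zero]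

section Cost

variable {S : Type} (p : R → S → ℝ)

lemma LPcost_eq_sum_fbar (y : Fin n → S) (f : Fin n → {α : R // α ≠ 0} → ℝ) :
    LPcost p y f = ∑ i, ∑ β, Real.log (p 0 (y i) / p β (y i)) * fbar f i β :=
  Fintype.sum_congr _ _ fun i => sum_mul_eq_sum_mul_fbar f i
    (g := fun β => Real.log (p 0 (y i) / p β (y i))) (Real.log_div_self _)

lemma LPcost_Xi (y : Fin n → S) (d : Fin n → R) :
    LPcost p y (Xi d) = ∑ i, Real.log (p 0 (y i) / p (d i) (y i)) := by
  simp [LPcost_eq_sum_fbar, fbar_Xi]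

lemma LPcost_Xi_zero (y : Fin n → S) : LPcost p y (Xi (0 : Fin n → R)) = 0 := by
  simp [LPcost_Xi]

variable {p} {τ : R → S → S}

lemma LPcost_Lf (hp : ∀ (α : R) (y : S), 0 < p α y)
    (hsym : ∀ (β : R) (y : S) (α : R), p α y = p (α - β) (τ β y)) (c : Fin n → R) (y : Fin n → S)
    (f : Fin n → {α : R // α ≠ 0} → ℝ) :
    LPcost p (fun i => τ (c i) (y i)) (Lf c f) = LPcost p y f - LPcost p y (Xi c) := by
  rw [LPcost_eq_sum_fbar, LPcost_eq_sum_fbar, LPcost_Xi, ← Finset.sum_sub_distrib]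
  refine Fintype.sum_congr _ _ fun i => ?_
  set llr : R → ℝ := fun β => Real.log (p 0 (y i) / p β (y i))
  calc ∑ β, Real.log (p 0 (τ (c i) (y i)) / p β (τ (c i) (y i))) * fbar (Lf c f) i β
      = ∑ β, Real.log (p 0 (τ (c i) (y i)) / p (β + c i - c i) (τ (c i) (y i)))
          * fbar f i (β + c i) := by simp only [fbar_Lf, add_sub_cancel_right]
    _ = ∑ β, Real.log (p 0 (τ (c i) (y i)) / p (β - c i) (τ (c i) (y i))) * fbar f i β :=
        Equiv.sum_comp (Equiv.addRight (c i))
          (fun β => Real.log (p 0 (τ (c i) (y i)) / p (β - c i) (τ (c i) (y i))) * fbar f i β)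
    _ = ∑ β, (llr β - llr (c i)) * fbar f i β := by
        simp only [log_ratio_translate hp hsym, llr]
    _ = ∑ β, llr β * fbar f i β - llr (c i) := by
        simp only [sub_mul, Finset.sum_sub_distrib, ← Finset.mul_sum, sum_fbar, mul_one]

end Cost

section Polytope

variable {m : ℕ} (H : Matrix (Fin m) (Fin n) R)

lemma fbar_eq_sum_SPC {f : Fin n → {α : R // α ≠ 0} → ℝ}
    {w : (j : Fin m) → ({i : Fin n // H j i ≠ 0} → R) → ℝ} (hQ : memQ H f w) (j : Fin m)
    (i : {i : Fin n // H j i ≠ 0}) (β : R) :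
    fbar f i.1 β = ∑ b, if b ∈ SPC H j ∧ b i = β then w j b else 0 := by
  refine congrFun (fbar_eq_of_sum_eq_one
    (g := fun β => ∑ b, if b ∈ SPC H j ∧ b i = β then w j b else 0) ?_ (hQ.2.2 j i)) β
  rw [Finset.sum_comm, ← hQ.2.1 j]
  simp [ite_and]

lemma memQ_Lf_Lw {c : Fin n → R} (hc : ∀ j, ∑ i, c i * H j i = 0)
    {f : Fin n → {α : R // α ≠ 0} → ℝ}
    {w : (j : Fin m) → ({i : Fin n // H j i ≠ 0} → R) → ℝ} (hQ : memQ H f w) :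
    memQ H (Lf c f) (Lw H c w) := by
  refine ⟨fun j b hb => hQ.1 j _ ((add_proj_mem_SPC_iff H (hc j) b).2 hb), fun j => ?_,
    fun j i α => ?_⟩
  · rw [← hQ.2.1 j, ← Equiv.sum_comp (Equiv.addRight (proj H j c))
      (fun b => if b ∈ SPC H j then w j b else 0)]
    simp only [Lw, Equiv.coe_addRight, add_proj_mem_SPC_iff H (hc j)]
  · rw [Lf_apply, fbar_eq_sum_SPC H hQ j i, ← Equiv.sum_comp (Equiv.addRight (proj H j c))
      (fun b => if b ∈ SPC H j ∧ b i = α + c i then w j b else 0)]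
    simp only [Lw, Equiv.coe_addRight, Pi.add_apply, add_proj_mem_SPC_iff H (hc j), proj,
      add_left_inj]

end Polytope

lemma mem_Bset_iff_translate {m : ℕ} (H : Matrix (Fin m) (Fin n) R) {c : Fin n → R}
    (hc : ∀ j, ∑ i, c i * H j i = 0) {S : Type} {p : R → S → ℝ}
    (hp : ∀ (α : R) (y : S), 0 < p α y) {τ : R → S → S}
    (hsym : ∀ (β : R) (y : S) (α : R), p α y = p (α - β) (τ β y)) (y : Fin n → S) :
    y ∈ Bset H p c ↔ (fun i => τ (c i) (y i)) ∈ Bset H p 0 := by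
  have hc_neg : ∀ j, ∑ i, (-c) i * H j i = 0 := fun j => by
    simp only [Pi.neg_apply, neg_mul, Finset.sum_neg_distrib, hc j, neg_zero]
  have Lf_Lf_neg : ∀ f, Lf c (Lf (-c) f) = f := fun f => by simpa using Lf_neg_Lf (-c) f
  constructor
  · rintro ⟨f, w, hQ, hne, hcost⟩
    refine ⟨Lf c f, Lw H c w, memQ_Lf_Lw H hc hQ, ?_, ?_⟩
    · rw [← Lf_Xi c]
      exact (Lf_injective c).ne hne
    · rw [LPcost_Lf hp hsym, LPcost_Xi_zero]
      linarith
  · rintro ⟨f, w, hQ, hne, hcost⟩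
    refine ⟨Lf (-c) f, Lw H (-c) w, memQ_Lf_Lw H hc_neg hQ, fun h => hne ?_, ?_⟩
    · rw [← Lf_Lf_neg f, h, Lf_Xi]
    · have h := LPcost_Lf hp hsym c y (Lf (-c) f)
      rw [Lf_Lf_neg] at h
      rw [LPcost_Xi_zero] at hcost
      linarith

/-- Under the channel symmetry condition, a competing feasible point exists for
(y, c) iff one exists for (G(y), 0); consequently G(B(c)) = B(0). -/
theorem error_set_translation {R : Type} [CommRing R] [Fintype R] [DecidableEq R]
    {m n : ℕ} (H : Matrix (Fin m) (Fin n) R) (c : Fin n → R)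
    (hc : ∀ j : Fin m, ∑ i : Fin n, c i * H j i = 0)
    {S : Type} (p : R → S → ℝ) (hp : ∀ (α : R) (y : S), 0 < p α y)
    (τ : R → S → S) (hbij : ∀ β : R, Function.Bijective (τ β))
    (hsym : ∀ (β : R) (y : S) (α : R), p α y = p (α - β) (τ β y)) :
    (∀ y : Fin n → S,
      ((∃ (f : Fin n → {α : R // α ≠ 0} → ℝ)
          (w : (j : Fin m) → ({i : Fin n // H j i ≠ 0} → R) → ℝ),
        memQ H f w ∧ f ≠ Xi c ∧ LPcost p y f ≤ LPcost p y (Xi c)) ↔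
       (∃ (ft : Fin n → {α : R // α ≠ 0} → ℝ)
          (wt : (j : Fin m) → ({i : Fin n // H j i ≠ 0} → R) → ℝ),
        memQ H ft wt ∧ ft ≠ Xi (0 : Fin n → R) ∧
          LPcost p (fun i => τ (c i) (y i)) ft ≤
            LPcost p (fun i => τ (c i) (y i)) (Xi (0 : Fin n → R))))) ∧
    (fun y : Fin n → S => fun i => τ (c i) (y i)) '' Bset H p c =
      Bset H p (0 : Fin n → R) := by
  have key := mem_Bset_iff_translate H hc hp hsym
  refine ⟨key, ?_⟩
  have hG : Function.Surjective fun (y : Fin n → S) i => τ (c i) (y i) :=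
    Function.Surjective.piMap fun i => (hbij (c i)).2
  rw [show Bset H p c = _ ⁻¹' Bset H p 0 from Set.ext key]
  exact Set.image_preimage_eq _ hG
end

section
/- Consider sum-product decoding with channel messages m_i(α) = p(y_i|α), initialization m_{j,i}^{D,0}(α) = 1, and updates m_{j,i}^{U,k}(α) = m_i(α)·∏_{l∈D_{j,i}} m_{l,i}^{D,k−1}(α) and m_{j,i}^{D,k}(α) = ∑_{(d_l): ∑_{l∈A_{j,i}} d_l H_{j,l} = −α H_{j,i}} ∏_{l∈A_{j,i}} m_{j,l}^{U,k}(d_l). Let m̃ denote the corresponding messages computed from ỹ with ỹ_i = τ_{c_i}(y_i) for a codeword c. Then for all k ≥ 0, j, i ∈ I_j, and α ∈ R: m_{j,i}^{D,k}(α) = m̃_{j,i}^{D,k}(α − c_i). -/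
open Finset
open scoped Classical

/-- Variable-to-check (upward) sum-product message, built from the previous
round's check-to-variable messages `mDprev`. Here `p α y` denotes p(y|α). -/
noncomputable def mU {R : Type} [CommRing R] [Fintype R] [DecidableEq R] {S : Type}
    {m n : ℕ} (H : Matrix (Fin m) (Fin n) R) (p : R → S → ℝ) (y : Fin n → S)
    (mDprev : Fin m → Fin n → R → ℝ) (j : Fin m) (i : Fin n) (α : R) : ℝ :=
  p α (y i) * ∏ l : {l : Fin m // H l i ≠ 0 ∧ l ≠ j}, mDprev l.1 i α

/-- Check-to-variable (downward) sum-product messages after k iterations. -/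
noncomputable def mD {R : Type} [CommRing R] [Fintype R] [DecidableEq R] {S : Type}
    {m n : ℕ} (H : Matrix (Fin m) (Fin n) R) (p : R → S → ℝ) (y : Fin n → S) :
    ℕ → Fin m → Fin n → R → ℝ
  | 0 => fun _ _ _ => 1
  | (k+1) => fun j i α =>
      ∑ d : {l : Fin n // H j l ≠ 0 ∧ l ≠ i} → R,
        if (∑ l : {l : Fin n // H j l ≠ 0 ∧ l ≠ i}, d l * H j l.1) = -(α * H j i)
        then ∏ l : {l : Fin n // H j l ≠ 0 ∧ l ≠ i}, mU H p y (mD H p y k) j l.1 (d l)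
        else 0

/-- Sum-product message symmetry: for a codeword c and translated observation
ỹ_i = τ_{c_i}(y_i), the downward messages satisfy
m_{j,i}^{D,k}(α) = m̃_{j,i}^{D,k}(α − c_i). -/
theorem mD_translation {R : Type} [CommRing R] [Fintype R] [DecidableEq R] {S : Type}
    {m n : ℕ} (H : Matrix (Fin m) (Fin n) R) (c : Fin n → R)
    (hc : ∀ j : Fin m, ∑ i : Fin n, c i * H j i = 0)
    (p : R → S → ℝ) (τ : R → S → S) (hbij : ∀ β : R, Function.Bijective (τ β))
    (hsym : ∀ (β : R) (y : S) (α : R), p α y = p (α - β) (τ β y))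
    (y : Fin n → S) :
    ∀ (k : ℕ) (j : Fin m) (i : Fin n), H j i ≠ 0 → ∀ α : R,
      mD H p y k j i α = mD H p (fun i => τ (c i) (y i)) k j i (α - c i) := by
  intro k
  induction k with
  | zero => intro j i hji α; simp [mD]
  | succ k ih =>
    intro j i hji α
    have hcsum : ∑ l : {l : Fin n // H j l ≠ 0 ∧ l ≠ i}, c l.1 * H j l.1
        = -(c i * H j i) := by
      have h0 := hc j
      have hsub : (insert i (Finset.univ.filter (fun l => H j l ≠ 0 ∧ l ≠ i)))
          ⊆ (Finset.univ : Finset (Fin n)) := Finset.subset_univ _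
      have hzero : ∀ x ∈ (Finset.univ : Finset (Fin n)),
          x ∉ insert i (Finset.univ.filter (fun l => H j l ≠ 0 ∧ l ≠ i)) →
          c x * H j x = 0 := by
        intro x _ hx
        simp only [Finset.mem_insert, Finset.mem_filter, Finset.mem_univ, true_and,
          not_or, not_and_or, not_not, not_ne_iff] at hx
        rcases hx.2 with h | h
        · rw [h, mul_zero]
        · exact absurd h (by simpa using hx.1)
      have := Finset.sum_subset hsub hzero
      rw [h0] at this
      have hni : i ∉ Finset.univ.filter (fun l => H j l ≠ 0 ∧ l ≠ i) := by simp
      rw [Finset.sum_insert hni] at this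
      have hattach : ∑ l : {l : Fin n // H j l ≠ 0 ∧ l ≠ i}, c l.1 * H j l.1
          = ∑ l ∈ Finset.univ.filter (fun l => H j l ≠ 0 ∧ l ≠ i), c l * H j l := by
        rw [← Finset.sum_subtype (Finset.univ.filter (fun l => H j l ≠ 0 ∧ l ≠ i))
          (p := fun l => H j l ≠ 0 ∧ l ≠ i) (by intro x; simp) (fun l => c l * H j l)]
      rw [hattach]
      linear_combination this
    simp only [mD]
    apply Fintype.sum_bijective
      (fun (d : {l : Fin n // H j l ≠ 0 ∧ l ≠ i} → R) l => d l - c l.1)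
    · constructor
      · intro a b hab
        funext l
        have h := congrFun hab l
        simpa using h
      · intro d
        exact ⟨fun l => d l + c l.1, funext fun l => by ring⟩
    · intro d
      have hcond : ((∑ l : {l : Fin n // H j l ≠ 0 ∧ l ≠ i}, d l * H j l.1) = -(α * H j i))
          ↔ ((∑ l : {l : Fin n // H j l ≠ 0 ∧ l ≠ i}, (d l - c l.1) * H j l.1)
              = -((α - c i) * H j i)) := by
        rw [Finset.sum_congr rfl (fun l _ => sub_mul (d l) (c l.1) (H j l.1)),
          Finset.sum_sub_distrib, hcsum]
        constructor <;> intro h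
        · rw [h]; ring
        · have : (∑ l : {l : Fin n // H j l ≠ 0 ∧ l ≠ i}, d l * H j l.1)
              - -(c i * H j i) - (c i * H j i) = -((α - c i) * H j i) - (c i * H j i) := by
            rw [h]
          calc (∑ l : {l : Fin n // H j l ≠ 0 ∧ l ≠ i}, d l * H j l.1)
              = (∑ l : {l : Fin n // H j l ≠ 0 ∧ l ≠ i}, d l * H j l.1)
                - -(c i * H j i) - (c i * H j i) := by ring
            _ = -((α - c i) * H j i) - (c i * H j i) := this
            _ = -(α * H j i) := by ring
      by_cases hP : (∑ l : {l : Fin n // H j l ≠ 0 ∧ l ≠ i}, d l * H j l.1) = -(α * H j i)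
      · rw [if_pos hP, if_pos (hcond.mp hP)]
        apply Finset.prod_congr rfl
        intro l _
        simp only [mU]
        congr 1
        · exact hsym (c l.1) (y l.1) (d l)
        · exact Finset.prod_congr rfl fun l' _ => ih l'.1 l.1 l'.2.1 (d l)
      · rw [if_neg hP, if_neg (fun h => hP (hcond.mpr h))]
end
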